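/- arXiv:2205.10831 — 2 statements merged into one kernel-verified Lean document; each statement's English description precedes it below -/
import Mathlib

section
/- Let U and V be two t-structures on a triangulated category T with d(U, V) < +∞. If U or V is stable, then U = V, i.e. U_{≤0} = V_{≤0} and U_{≥0} = V_{≥0}. -/
/-!
For a stable t-structure all aisles coincide, `U_{≤n} = U_{≤0}`, so shifting the sandwich
`V_{≤m} ⊆ U_{≤0} ⊆ V_{≤m+d}` collapses it to `U_{≤0} = V_{≤0}`. The coaisles then agree as well,
since `U_{≥0}` is the right orthogonal of `U_{≤-1}`.
-/

open CategoryTheory Category Limits Pretriangulated Triangulated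

namespace TStructurePaper

variable {C : Type*} [Category C] [Preadditive C] [HasZeroObject C]
  [HasShift C ℤ] [∀ (n : ℤ), (shiftFunctor C n).Additive] [Pretriangulated C]

/-- A t-structure is non-degenerate if every object of `⋂ₙ U_{≤n}` and every object
of `⋂ₙ U_{≥n}` is a zero object. -/
def IsNondegenerate (t : TStructure C) : Prop :=
  (∀ X : C, (∀ n : ℤ, t.le n X) → IsZero X) ∧
  (∀ X : C, (∀ n : ℤ, t.ge n X) → IsZero X)

/-- A t-structure is stable if `Σ U_{≤0} = U_{≤0}`. -/
def IsStable (t : TStructure C) : Prop :=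
  ∀ X : C, t.le 0 X ↔ t.le 0 (X⟦(1 : ℤ)⟧)

/-- A t-structure is hereditary if `Hom(U_{≥0}, U_{≤-2}) = 0`. -/
def IsHereditary (t : TStructure C) : Prop :=
  ∀ ⦃X Y : C⦄, t.ge 0 X → t.le (-2) Y → ∀ f : X ⟶ Y, f = 0

/-- `f` factors through some object satisfying the predicate `P`. -/
def FactorsThrough (P : C → Prop) {X Y : C} (f : X ⟶ Y) : Prop :=
  ∃ (Z : C) (_ : P Z) (u : X ⟶ Z) (v : Z ⟶ Y), f = u ≫ v

/-- A t-structure is regular if any morphism `f : X → Y` with `Y ∈ U_{≤m}` for some `m`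
which factors through an object of `U_{≥n}` for every `n` vanishes, and dually. -/
def IsRegular (t : TStructure C) : Prop :=
  (∀ ⦃X Y : C⦄, (∃ m : ℤ, t.le m Y) → ∀ f : X ⟶ Y,
      (∀ n : ℤ, FactorsThrough (t.ge n) f) → f = 0) ∧
  (∀ ⦃X Y : C⦄, (∃ m : ℤ, t.ge m X) → ∀ f : X ⟶ Y,
      (∀ n : ℤ, FactorsThrough (t.le n) f) → f = 0)

/-- `Hom(U_{≥0}, U_{≤-(d+1)}) = 0`. -/
def HasGlDimAtMost (t : TStructure C) (d : ℕ) : Prop :=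
  ∀ ⦃X Y : C⦄, t.ge 0 X → t.le (-(d + 1)) Y → ∀ f : X ⟶ Y, f = 0

/-- The global dimension of a t-structure, as an element of `ℕ∞`. -/
noncomputable def glDim (t : TStructure C) : ℕ∞ :=
  sInf {e : ℕ∞ | ∃ d : ℕ, e = d ∧ HasGlDimAtMost t d}

/-- `d(U,V) ≤ d`, i.e. `V_{≤m} ⊆ U_{≤0} ⊆ V_{≤m+d}` for some integer `m`. -/
def DistAtMost (u v : TStructure C) (d : ℕ) : Prop :=
  ∃ m : ℤ, (∀ X : C, v.le m X → u.le 0 X) ∧ (∀ X : C, u.le 0 X → v.le (m + d) X)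

/-- The distance between two t-structures, as an element of `ℕ∞`. -/
noncomputable def dist (u v : TStructure C) : ℕ∞ :=
  sInf {e : ℕ∞ | ∃ d : ℕ, e = d ∧ DistAtMost u v d}

/-- Membership of the subcategory `U_ℕ = ⋃_{n ≥ 0} U_{[-n, n]}`. -/
def InUN (t : TStructure C) (X : C) : Prop :=
  ∃ n : ℕ, t.ge (-(n : ℤ)) X ∧ t.le (n : ℤ) X

/-- A t-structure is bounded if `⋃ₙ U_{≤n} = T = ⋃ₙ U_{≥n}`. -/
def IsBounded (t : TStructure C) : Prop :=
  (∀ X : C, ∃ n : ℤ, t.le n X) ∧ (∀ X : C, ∃ n : ℤ, t.ge n X)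

/-- Membership of the heart `U₀ = U_{≤0} ∩ U_{≥0}`. -/
def InHeart (t : TStructure C) (X : C) : Prop :=
  t.le 0 X ∧ t.ge 0 X

/-- Truncation data for a t-structure: functors `τ_{≤n}` right adjoint to the inclusions
`U_{≤n} ↪ T` (with counit `ι`) and functors `τ_{≥n}` left adjoint to the inclusions
`U_{≥n} ↪ T` (with unit `π`). -/
structure TruncData (t : TStructure C) where
  τle (n : ℤ) : C ⥤ C
  τge (n : ℤ) : C ⥤ C
  ι (n : ℤ) : τle n ⟶ 𝟭 C
  π (n : ℤ) : 𝟭 C ⟶ τge n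
  le_mem (n : ℤ) (X : C) : t.le n ((τle n).obj X)
  ge_mem (n : ℤ) (X : C) : t.ge n ((τge n).obj X)
  le_adj (n : ℤ) (A X : C) (hA : t.le n A) :
    Function.Bijective (fun g : A ⟶ (τle n).obj X => g ≫ (ι n).app X)
  ge_adj (n : ℤ) (X B : C) (hB : t.ge n B) :
    Function.Bijective (fun g : (τge n).obj X ⟶ B => (π n).app X ≫ g)

/-- The cohomological functor `Hⁿ = Σⁿ ∘ τ_{≤n} ∘ τ_{≥n}` associated to a t-structure. -/
def TruncData.H {t : TStructure C} (d : TruncData t) (n : ℤ) : C ⥤ C :=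
  d.τge n ⋙ d.τle n ⋙ shiftFunctor C n

lemma le_add_le_le_add {u v : TStructure C} {a b : ℤ} (h : u.le a ≤ v.le b) (n : ℤ) :
    u.le (n + a) ≤ v.le (n + b) := by
  rw [← u.shift_le n a _ rfl, ← v.shift_le n b _ rfl]
  exact fun X hX => h _ hX

lemma le_eq_of_le_zero_eq {u v : TStructure C} (h : u.le 0 = v.le 0) (n : ℤ) :
    u.le n = v.le n := by
  rw [← u.shift_le n 0 n (add_zero n), ← v.shift_le n 0 n (add_zero n), h]

lemma ge_eq_of_le_eq {u v : TStructure C} {n₀ n₁ : ℤ} (hn : n₀ + 1 = n₁)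
    (h : u.le n₀ = v.le n₀) : u.ge n₁ = v.ge n₁ := by
  ext X
  simp only [TStructure.ge_iff_isGE, u.isGE_iff_orthogonal n₀ n₁ hn,
    v.isGE_iff_orthogonal n₀ n₁ hn, ← TStructure.le_iff_isLE, h]

lemma IsStable.le_add_one_eq {u : TStructure C} (hu : IsStable u) (n : ℤ) :
    u.le (n + 1) = u.le n := by
  have hone : u.le 1 = u.le 0 := by
    ext X
    rw [← u.shift_le 1 0 1 (add_zero 1)]
    exact (hu X).symm
  rw [← u.shift_le n 1 _ rfl, hone, u.shift_le n 0 n (add_zero n)]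

lemma IsStable.le_eq_le_zero {u : TStructure C} (hu : IsStable u) (n : ℤ) : u.le n = u.le 0 := by
  induction n using Int.induction_on with
  | zero => rfl
  | succ k ih => rw [hu.le_add_one_eq, ih]
  | pred k ih => rw [← ih, ← hu.le_add_one_eq, sub_add_cancel]

lemma exists_distAtMost_of_dist_lt_top {u v : TStructure C} (h : dist u v < ⊤) :
    ∃ d : ℕ, DistAtMost u v d := by
  obtain ⟨-, ⟨d, -, hd⟩, -⟩ := sInf_lt_iff.1 h
  exact ⟨d, hd⟩

lemma DistAtMost.le_zero_eq_of_isStable_left {u v : TStructure C} {d : ℕ} (hd : DistAtMost u v d)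
    (hu : IsStable u) : u.le 0 = v.le 0 := by
  obtain ⟨m, hvu, huv⟩ := hd
  have hvu' := le_add_le_le_add hvu (-m)
  have huv' := le_add_le_le_add huv (-(m + d))
  rw [hu.le_eq_le_zero, neg_add_cancel] at hvu' huv'
  exact le_antisymm huv' hvu'

lemma DistAtMost.le_zero_eq_of_isStable_right {u v : TStructure C} {d : ℕ} (hd : DistAtMost u v d)
    (hv : IsStable v) : u.le 0 = v.le 0 := by
  obtain ⟨m, hvu, huv⟩ := hd
  refine le_antisymm ?_ ?_
  · rw [← hv.le_eq_le_zero (m + d)]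
    exact huv
  · rw [← hv.le_eq_le_zero m]
    exact hvu

/-- If `d(U,V) < +∞` and `U` or `V` is stable, then `U = V`, i.e.
`U_{≤0} = V_{≤0}` and `U_{≥0} = V_{≥0}`. -/
theorem statement16 (u v : TStructure C) (h : dist u v < ⊤)
    (hs : IsStable u ∨ IsStable v) :
    (∀ X : C, u.le 0 X ↔ v.le 0 X) ∧ (∀ X : C, u.ge 0 X ↔ v.ge 0 X) := by
  obtain ⟨d, hd⟩ := exists_distAtMost_of_dist_lt_top h
  have hle : u.le 0 = v.le 0 :=
    hs.elim hd.le_zero_eq_of_isStable_left hd.le_zero_eq_of_isStable_right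
  have hge : u.ge 0 = v.ge 0 := ge_eq_of_le_eq (neg_add_cancel 1) (le_eq_of_le_zero_eq hle (-1))
  exact ⟨fun X => by rw [hle], fun X => by rw [hge]⟩

end TStructurePaper
end

section
/- Let U be a fixed t-structure on a triangulated category T, set T^b = U_ℕ, and let U^b be the restricted bounded t-structure on T^b. Then the assignment V ↦ V^b (sending a t-structure V on T to its restriction V^b = (V_{≤0} ∩ T^b, V_{≥0} ∩ T^b) on T^b) is a bijection from the set of t-structures V on T with d(U, V) < +∞ onto the set of t-structures V' on T^b with d(U^b, V') < +∞. -/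
open CategoryTheory Category Limits Pretriangulated Triangulated

namespace TStructurePaper

variable {C : Type*} [Category C] [Preadditive C] [HasZeroObject C]
  [HasShift C ℤ] [∀ (n : ℤ), (shiftFunctor C n).Additive] [Pretriangulated C]

/-- A t-structure on the full triangulated subcategory `T^b = U_ℕ` of `T`, encoded by a pair
of (isomorphism-closed) families of predicates on objects of `T` supported in `T^b`,
satisfying the axioms of a t-structure relative to `T^b` (the distinguished triangles of the
full triangulated subcategory `T^b` being the distinguished triangles of `T` whose vertices
lie in `T^b`). -/
structure RelTStructure (t : TStructure C) where
  LE (n : ℤ) : C → Prop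
  GE (n : ℤ) : C → Prop
  LE_mem (n : ℤ) (X : C) : LE n X → InUN t X
  GE_mem (n : ℤ) (X : C) : GE n X → InUN t X
  LE_iso (n : ℤ) ⦃X Y : C⦄ : (X ≅ Y) → LE n X → LE n Y
  GE_iso (n : ℤ) ⦃X Y : C⦄ : (X ≅ Y) → GE n X → GE n Y
  LE_shift (n a n' : ℤ) (h : a + n' = n) (X : C) : LE n X → LE n' (X⟦a⟧)
  GE_shift (n a n' : ℤ) (h : a + n' = n) (X : C) : GE n X → GE n' (X⟦a⟧)
  zero' ⦃X Y : C⦄ (f : X ⟶ Y) : LE 0 X → GE 1 Y → f = 0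
  LE_zero_le (X : C) : LE 0 X → LE 1 X
  GE_one_le (X : C) : GE 1 X → GE 0 X
  exists_triangle (A : C) (hA : InUN t A) : ∃ (X Y : C) (_ : LE 0 X) (_ : GE 1 Y)
    (f : X ⟶ A) (g : A ⟶ Y) (h : Y ⟶ X⟦(1 : ℤ)⟧), Triangle.mk f g h ∈ distTriang C

/-- `d(U^b, V') ≤ d` for a t-structure `V'` on `T^b = U_ℕ`: there is an integer `m` with
`V'_{≤m} ⊆ U^b_{≤0} ⊆ V'_{≤m+d}` inside `T^b`. -/
def DistAtMostRel (t : TStructure C) (v' : RelTStructure t) (d : ℕ) : Prop :=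
  ∃ m : ℤ, (∀ X : C, v'.LE m X → t.le 0 X) ∧
           (∀ X : C, InUN t X → t.le 0 X → v'.LE (m + d) X)

/-- The distance `d(U^b, V')`, computed in `T^b = U_ℕ`, as an element of `ℕ∞`. -/
noncomputable def distRel (t : TStructure C) (v' : RelTStructure t) : ℕ∞ :=
  sInf {e : ℕ∞ | ∃ d : ℕ, e = d ∧ DistAtMostRel t v' d}

/-!
A t-structure `V` with `d(U, V) < ∞` is pinched between shifts of `U`: `U_{≤a} ⊆ V_{≤0} ⊆ U_{≤b}`.
Hence `V_{≤0}` consists of the objects of `U_{≤b}` left orthogonal to `V_{≥1} ∩ T^b`: a morphism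
from such an object to `Y ∈ V_{≥1}` factors through the `U`-truncation `τ_{≤b'} Y`, which lies in
`V_{≥1} ∩ T^b`. So `V` is determined by `V^b`. Conversely, for `V'` on `T^b` with
`U^b_{≤a} ⊆ V'_{≤0} ⊆ U_{≤b}` the same recipe,
`V_{≤n} = U_{≤b+n} ∩ ⊥V'_{≥n+1}` and `V_{≥n} = U_{≥a+n} ∩ V'_{≤n-1}⊥`, is a t-structure on `T`
restricting to `V'`. The truncation triangle of `A` is glued from the `U`-truncations of `A` at
`b` and `a` and the `V'`-truncation of the bounded piece in between; since `T` is only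
pretriangulated, the gluing uses cones of composites and exact Hom sequences instead of the
octahedral axiom.
-/

lemma yoneda_exact₁ (T : Triangle C) (hT : T ∈ distTriang C) {X : C} (f : T.obj₁ ⟶ X)
    (hf : T.mor₃ ≫ f⟦(1 : ℤ)⟧' = 0) : ∃ g : T.obj₂ ⟶ X, f = T.mor₁ ≫ g := by
  obtain ⟨g, hg, -⟩ := complete_distinguished_triangle_morphism₂ T _ hT
    (contractible_distinguished X) f 0 (hf.trans zero_comp.symm)
  exact ⟨g, (hg.trans (comp_id f)).symm⟩

lemma hom_from_shift_eq_zero {D : Type*} [Category D] [Preadditive D] [HasShift D ℤ]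
    [∀ n : ℤ, (shiftFunctor D n).Additive] (a : ℤ) {X Y : D} (h : ∀ g : X ⟶ Y⟦-a⟧, g = 0)
    (f : X⟦a⟧ ⟶ Y) : f = 0 := by
  let e := (shiftFunctorCompIsoId D (-a) a (neg_add_cancel a)).app Y
  obtain ⟨g, hg⟩ := (shiftFunctor D a).map_surjective (f ≫ e.inv)
  rw [← cancel_mono e.inv, ← hg, h g, Functor.map_zero, zero_comp]

lemma hom_to_shift_eq_zero {D : Type*} [Category D] [Preadditive D] [HasShift D ℤ]
    [∀ n : ℤ, (shiftFunctor D n).Additive] (a : ℤ) {X Y : D} (h : ∀ g : X⟦-a⟧ ⟶ Y, g = 0)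
    (f : X ⟶ Y⟦a⟧) : f = 0 := by
  let e := (shiftFunctorCompIsoId D (-a) a (neg_add_cancel a)).app X
  obtain ⟨g, hg⟩ := (shiftFunctor D a).map_surjective (e.hom ≫ f)
  rw [← cancel_epi e.hom, ← hg, h g, Functor.map_zero, comp_zero]

lemma shift_hom_eq_zero {D : Type*} [Category D] [Preadditive D] [HasShift D ℤ]
    [∀ n : ℤ, (shiftFunctor D n).Additive] (a : ℤ) {X Y : D} (h : ∀ g : X ⟶ Y, g = 0)
    (f : X⟦a⟧ ⟶ Y⟦a⟧) : f = 0 := by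
  obtain ⟨g, rfl⟩ := (shiftFunctor D a).map_surjective f
  rw [h g, Functor.map_zero]

lemma hom_to_cone_comp_eq_zero {X B Y A Q Y' Z : C} {f : X ⟶ B} {p : B ⟶ Y}
    {δ : Y ⟶ X⟦(1 : ℤ)⟧} {i : B ⟶ A} {g : A ⟶ Q} {δ' : Q ⟶ B⟦(1 : ℤ)⟧} {g' : A ⟶ Y'}
    {δ'' : Y' ⟶ X⟦(1 : ℤ)⟧} (h₁ : Triangle.mk f p δ ∈ distTriang C)
    (h₂ : Triangle.mk i g δ' ∈ distTriang C) (h : Triangle.mk (f ≫ i) g' δ'' ∈ distTriang C)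
    (hY : ∀ φ : Z ⟶ Y, φ = 0) (hQ : ∀ φ : Z ⟶ Q, φ = 0) (ζ : Z ⟶ Y') : ζ = 0 := by
  have h₃₁ : δ'' ≫ (f ≫ i)⟦(1 : ℤ)⟧' = 0 := comp_distTriang_mor_zero₃₁ _ h
  have h₁₂ : f ≫ i ≫ g' = 0 := (assoc f i g').symm.trans (comp_distTriang_mor_zero₁₂ _ h)
  have hζ : ζ ≫ δ'' = 0 := by
    obtain ⟨c, hc⟩ : ∃ c : Z ⟶ Q, (ζ ≫ δ'') ≫ f⟦(1 : ℤ)⟧' = c ≫ δ' :=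
      Triangle.coyoneda_exact₁ _ h₂ _ (by
        change ((ζ ≫ δ'') ≫ f⟦(1 : ℤ)⟧') ≫ i⟦(1 : ℤ)⟧' = 0
        simp only [assoc, ← Functor.map_comp, h₃₁, comp_zero])
    obtain ⟨c', hc'⟩ : ∃ c' : Z ⟶ Y, ζ ≫ δ'' = c' ≫ δ :=
      Triangle.coyoneda_exact₁ _ h₁ _ (by
        change (ζ ≫ δ'') ≫ f⟦(1 : ℤ)⟧' = 0
        rw [hc, hQ c, zero_comp])
    rw [hc', hY c', zero_comp]
  obtain ⟨η, rfl⟩ := Triangle.coyoneda_exact₃ _ h ζ hζ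
  obtain ⟨η₁, rfl⟩ : ∃ η₁ : Z ⟶ B, η = η₁ ≫ i := Triangle.coyoneda_exact₂ _ h₂ η (hQ _)
  obtain ⟨η₂, rfl⟩ : ∃ η₂ : Z ⟶ X, η₁ = η₂ ≫ f := Triangle.coyoneda_exact₂ _ h₁ η₁ (hY _)
  change ((η₂ ≫ f) ≫ i) ≫ g' = 0
  simp only [assoc, h₁₂, comp_zero]

lemma hom_from_fiber_comp_eq_zero {P A B X Y X' Z : C} {e : P ⟶ A} {g : A ⟶ B}
    {δ : B ⟶ P⟦(1 : ℤ)⟧} {f : X ⟶ B} {q : B ⟶ Y} {δ' : Y ⟶ X⟦(1 : ℤ)⟧} {i : X' ⟶ A}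
    {δ'' : Y ⟶ X'⟦(1 : ℤ)⟧} (h₁ : Triangle.mk e g δ ∈ distTriang C)
    (h₂ : Triangle.mk f q δ' ∈ distTriang C) (h : Triangle.mk i (g ≫ q) δ'' ∈ distTriang C)
    (hP : ∀ φ : P ⟶ Z, φ = 0) (hX : ∀ φ : X ⟶ Z, φ = 0) (ξ : X' ⟶ Z) : ξ = 0 := by
  have h₁₂ : i ≫ g ≫ q = 0 := comp_distTriang_mor_zero₁₂ _ h
  have h₂₃ : g ≫ q ≫ δ'' = 0 := (assoc g q δ'').symm.trans (comp_distTriang_mor_zero₂₃ _ h)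
  have hξ : δ'' ≫ ξ⟦(1 : ℤ)⟧' = 0 := by
    obtain ⟨c, hc⟩ : ∃ c : P⟦(1 : ℤ)⟧ ⟶ Z⟦(1 : ℤ)⟧, q ≫ δ'' ≫ ξ⟦(1 : ℤ)⟧' = δ ≫ c :=
      Triangle.yoneda_exact₃ _ h₁ _ (by
        change g ≫ q ≫ δ'' ≫ ξ⟦(1 : ℤ)⟧' = 0
        rw [reassoc_of% h₂₃, zero_comp])
    obtain ⟨c', hc'⟩ : ∃ c' : X⟦(1 : ℤ)⟧ ⟶ Z⟦(1 : ℤ)⟧, δ'' ≫ ξ⟦(1 : ℤ)⟧' = δ' ≫ c' :=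
      Triangle.yoneda_exact₃ _ h₂ _ (by
        change q ≫ δ'' ≫ ξ⟦(1 : ℤ)⟧' = 0
        rw [hc, shift_hom_eq_zero 1 hP c, comp_zero])
    rw [hc', shift_hom_eq_zero 1 hX c', comp_zero]
  obtain ⟨η, rfl⟩ : ∃ η : A ⟶ Z, ξ = i ≫ η := yoneda_exact₁ _ h ξ hξ
  obtain ⟨η₁, rfl⟩ : ∃ η₁ : B ⟶ Z, η = g ≫ η₁ := Triangle.yoneda_exact₂ _ h₁ η (hP _)
  obtain ⟨θ, hθ⟩ : ∃ θ : X' ⟶ X, i ≫ g = θ ≫ f :=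
    Triangle.coyoneda_exact₂ _ h₂ _ (by
      change (i ≫ g) ≫ q = 0
      rw [assoc, h₁₂])
  rw [← assoc, hθ, assoc, hX (f ≫ η₁), comp_zero]

section TStructure

variable (u : TStructure C)

lemma le_shift_iff (X : C) (a n : ℤ) : u.le n (X⟦a⟧) ↔ u.le (n + a) X := by
  simpa only [u.le_iff_isLE] using u.isLE_shift_iff X (n + a) a n

lemma ge_shift_iff (X : C) (a n : ℤ) : u.ge n (X⟦a⟧) ↔ u.ge (n + a) X := by
  simpa only [u.ge_iff_isGE] using u.isGE_shift_iff X (n + a) a n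

lemma hom_eq_zero_of_le_of_ge {X Y : C} {k l : ℤ} (hX : u.le k X) (hY : u.ge l Y) (h : k < l)
    (f : X ⟶ Y) : f = 0 :=
  u.zero_of_isLE_of_isGE f k l h ⟨hX⟩ ⟨hY⟩

lemma le_of_orthogonal {n : ℤ} {X : C} (h : ∀ Y, u.ge (n + 1) Y → ∀ f : X ⟶ Y, f = 0) :
    u.le n X :=
  ((u.isLE_iff_orthogonal n (n + 1) rfl X).2 fun Y f hY => h Y hY.ge f).le

lemma ge_of_orthogonal {n : ℤ} {Y : C} (h : ∀ X, u.le (n - 1) X → ∀ f : X ⟶ Y, f = 0) :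
    u.ge n Y :=
  ((u.isGE_iff_orthogonal (n - 1) n (by omega) Y).2 fun X f hX => h X hX.le f).ge

lemma ge_obj₁ {T : Triangle C} (hT : T ∈ distTriang C) {m₂ m₃ : ℤ} (h₂ : u.ge m₂ T.obj₂)
    (h₃ : u.ge m₃ T.obj₃) : u.ge (min m₂ (m₃ + 1)) T.obj₁ := by
  refine (u.isGE₂ _ (inv_rot_of_distTriang _ hT) _ ⟨?_⟩ ⟨u.ge_antitone (min_le_left _ _) _ h₂⟩).ge
  exact (ge_shift_iff u _ _ _).2 (u.ge_antitone (by omega) _ h₃)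

lemma le_obj₃ {T : Triangle C} (hT : T ∈ distTriang C) {m₁ m₂ : ℤ} (h₁ : u.le m₁ T.obj₁)
    (h₂ : u.le m₂ T.obj₂) : u.le (max (m₁ - 1) m₂) T.obj₃ := by
  refine (u.isLE₂ _ (rot_of_distTriang _ hT) _ ⟨u.le_monotone (le_max_right _ _) _ h₂⟩ ⟨?_⟩).le
  exact (le_shift_iff u _ _ _).2 (u.le_monotone (by omega) _ h₁)

lemma le_of_le_subset {V : TStructure C} {p q : ℤ} (h : ∀ X, u.le p X → V.le q X) (n : ℤ)
    {X : C} (hX : u.le (p + n) X) : V.le (q + n) X :=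
  (le_shift_iff V X n q).1 (h _ ((le_shift_iff u X n p).2 hX))

lemma ge_of_le_subset {V : TStructure C} {p : ℤ} (h : ∀ X, u.le p X → V.le 0 X) {Y : C}
    (hY : V.ge 1 Y) : u.ge (p + 1) Y :=
  ge_of_orthogonal u fun X hX f =>
    hom_eq_zero_of_le_of_ge V (h X (by simpa using hX)) hY zero_lt_one f

lemma inUN_of_ge_of_le {X : C} {a b : ℤ} (ha : u.ge a X) (hb : u.le b X) : InUN u X :=
  ⟨a.natAbs + b.natAbs, u.ge_antitone (by omega) _ ha, u.le_monotone (by omega) _ hb⟩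

lemma inUN_of_iso {X Y : C} (e : X ≅ Y) : InUN u X → InUN u Y
  | ⟨n, h₁, h₂⟩ => ⟨n, (u.ge _).prop_of_iso e h₁, (u.le _).prop_of_iso e h₂⟩

lemma inUN_shift {X : C} (a : ℤ) : InUN u X → InUN u (X⟦a⟧)
  | ⟨n, h₁, h₂⟩ => inUN_of_ge_of_le u ((ge_shift_iff u X a (-n - a)).2 (by simpa using h₁))
      ((le_shift_iff u X a (n - a)).2 (by simpa using h₂))

lemma tStructure_ext {V W : TStructure C} (h : ∀ X, V.le 0 X ↔ W.le 0 X) : V = W := by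
  have hle : V.le = W.le := by
    funext n X
    simpa using propext ((le_shift_iff V X n 0).symm.trans ((h _).trans (le_shift_iff W X n 0)))
  have hge : V.ge = W.ge := by
    funext n Y
    refine propext ⟨fun hY => ge_of_orthogonal W fun X hX f => ?_,
      fun hY => ge_of_orthogonal V fun X hX f => ?_⟩
    · exact hom_eq_zero_of_le_of_ge V (hle ▸ hX) hY (by omega) f
    · exact hom_eq_zero_of_le_of_ge W (hle ▸ hX) hY (by omega) f
  cases V
  cases W
  congr

end TStructure

namespace RelTStructure

variable {t : TStructure C}

lemma ext {v w : RelTStructure t} (hLE : ∀ n X, v.LE n X ↔ w.LE n X)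
    (hGE : ∀ n X, v.GE n X ↔ w.GE n X) : v = w := by
  have hLE' : v.LE = w.LE := funext fun n => funext fun X => propext (hLE n X)
  have hGE' : v.GE = w.GE := funext fun n => funext fun X => propext (hGE n X)
  cases v
  cases w
  congr

variable (v : RelTStructure t)

lemma LE_shift_iff (X : C) (a n : ℤ) : v.LE n (X⟦a⟧) ↔ v.LE (n + a) X :=
  ⟨fun h => v.LE_iso _ ((shiftEquiv C a).unitIso.symm.app X) (v.LE_shift n (-a) _ (by omega) _ h),
    v.LE_shift _ a n (by omega) X⟩

lemma GE_shift_iff (X : C) (a n : ℤ) : v.GE n (X⟦a⟧) ↔ v.GE (n + a) X :=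
  ⟨fun h => v.GE_iso _ ((shiftEquiv C a).unitIso.symm.app X) (v.GE_shift n (-a) _ (by omega) _ h),
    v.GE_shift _ a n (by omega) X⟩

lemma LE_monotone : Monotone v.LE :=
  monotone_int_of_le_succ fun n X hX => by
    have := v.LE_zero_le _ ((v.LE_shift_iff X n 0).2 (by rwa [zero_add]))
    rwa [LE_shift_iff, add_comm] at this

lemma GE_antitone : Antitone v.GE :=
  antitone_int_of_succ_le fun n X hX => by
    have := v.GE_one_le _ ((v.GE_shift_iff X n 1).2 (by rwa [add_comm]))
    rwa [GE_shift_iff, zero_add] at this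

lemma hom_eq_zero_of_LE_of_GE {X Y : C} {k l : ℤ} (hX : v.LE k X) (hY : v.GE l Y) (h : k < l)
    (f : X ⟶ Y) : f = 0 := by
  apply (shiftFunctor C k).map_injective
  rw [Functor.map_zero]
  refine v.zero' _ ((v.LE_shift_iff X k 0).2 (by rwa [zero_add])) ?_
  exact v.GE_antitone (show 1 ≤ l - k by omega) _
    ((v.GE_shift_iff Y k _).2 (by rwa [sub_add_cancel]))

lemma LE_zero_of_orthogonal {X : C} (hX : InUN t X)
    (h : ∀ Y, v.GE 1 Y → ∀ f : X ⟶ Y, f = 0) : v.LE 0 X := by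
  obtain ⟨K, Q, hK, hQ, f, g, δ, hT⟩ := v.exists_triangle X hX
  have hQ₀ : IsZero Q := by
    obtain ⟨c, hc⟩ : ∃ c : K⟦(1 : ℤ)⟧ ⟶ Q, 𝟙 Q = δ ≫ c :=
      Triangle.yoneda_exact₃ _ hT (𝟙 Q) ((comp_id g).trans (h Q hQ g))
    have hK' : v.LE (-1) (K⟦(1 : ℤ)⟧) := (v.LE_shift_iff K 1 (-1)).2 (by simpa using hK)
    rw [IsZero.iff_id_eq_zero, hc, v.hom_eq_zero_of_LE_of_GE hK' hQ (by omega) c, comp_zero]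
  have : IsIso f := (Triangle.isZero₃_iff_isIso₁ _ hT).1 hQ₀
  exact v.LE_iso 0 (asIso f) hK

lemma GE_one_of_orthogonal {Y : C} (hY : InUN t Y)
    (h : ∀ X, v.LE 0 X → ∀ f : X ⟶ Y, f = 0) : v.GE 1 Y := by
  obtain ⟨K, Q, hK, hQ, f, g, δ, hT⟩ := v.exists_triangle Y hY
  have hK₀ : IsZero K := by
    obtain ⟨c, hc⟩ := Triangle.coyoneda_exact₂ _ (inv_rot_of_distTriang _ hT) (𝟙 K)
      ((id_comp f).trans (h K hK f))
    have hQ' : v.GE 2 (Q⟦(-1 : ℤ)⟧) := (v.GE_shift_iff Q (-1) 2).2 (by simpa using hQ)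
    rw [IsZero.iff_id_eq_zero, hc, v.hom_eq_zero_of_LE_of_GE hK hQ' (by omega) c]
    exact zero_comp
  have : IsIso g := (Triangle.isZero₁_iff_isIso₂ _ hT).1 hK₀
  exact v.GE_iso 1 (asIso g).symm hQ

lemma LE_of_orthogonal {n : ℤ} {X : C} (hX : InUN t X)
    (h : ∀ Y, v.GE (n + 1) Y → ∀ f : X ⟶ Y, f = 0) : v.LE n X := by
  have := v.LE_zero_of_orthogonal (inUN_shift t n hX) fun Y hY f => ?_
  · rwa [LE_shift_iff, zero_add] at this
  exact hom_from_shift_eq_zero n (h _ ((v.GE_shift_iff Y (-n) (n + 1)).2 (by simpa using hY))) f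

lemma GE_of_orthogonal {n : ℤ} {Y : C} (hY : InUN t Y)
    (h : ∀ X, v.LE (n - 1) X → ∀ f : X ⟶ Y, f = 0) : v.GE n Y := by
  have := v.GE_one_of_orthogonal (inUN_shift t (n - 1) hY) fun X hX f => ?_
  · rwa [GE_shift_iff, add_sub_cancel] at this
  exact hom_to_shift_eq_zero (n - 1) (h _ ((v.LE_shift_iff X _ _).2 (by simpa using hX))) f

structure IsBetween (a b : ℤ) : Prop where
  le : a ≤ b
  LE_of_le (n : ℤ) (X : C) : InUN t X → t.le (a + n) X → v.LE n X
  le_of_LE (n : ℤ) (X : C) : v.LE n X → t.le (b + n) X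

variable {v} {a b : ℤ}

lemma IsBetween.ge_of_GE (hv : v.IsBetween a b) {n : ℤ} {Y : C} (hY : v.GE n Y) :
    t.ge (a + n) Y := by
  obtain ⟨N, hY₁, -⟩ := v.GE_mem n Y hY
  obtain ⟨K, Q, hK, hQ, f, g, δ, hT⟩ := t.exists_triangle Y (a + n - 1) (a + n) (by ring)
  have hKv : v.LE (n - 1) K := hv.LE_of_le (n - 1) K
    (inUN_of_ge_of_le t (ge_obj₁ t hT hY₁ hQ) hK) (by rwa [add_sub_assoc] at hK)
  have hf : f = 0 := v.hom_eq_zero_of_LE_of_GE hKv hY (by omega) f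
  refine ge_of_orthogonal t fun Z hZ φ => ?_
  obtain ⟨ψ, rfl⟩ : ∃ ψ : Z ⟶ K, φ = ψ ≫ f :=
    Triangle.coyoneda_exact₂ _ hT φ (hom_eq_zero_of_le_of_ge t hZ hQ (by omega) _)
  rw [hf, comp_zero]

lemma hom_eq_zero_of_orthogonal (hb : ∀ X, v.LE 0 X → t.le b X) {X Y : C} {c a' : ℤ}
    (hX : t.le c X) (hXv : ∀ Z, v.GE 1 Z → ∀ f : X ⟶ Z, f = 0)
    (hY : t.ge a' Y) (hYv : ∀ Z, v.LE 0 Z → ∀ f : Z ⟶ Y, f = 0) (f : X ⟶ Y) : f = 0 := by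
  obtain ⟨K, Q, hK, hQ, i, p, δ, hT⟩ := t.exists_triangle Y (max b c) (max b c + 1) rfl
  obtain ⟨g, rfl⟩ : ∃ g : X ⟶ K, f = g ≫ i := Triangle.coyoneda_exact₂ _ hT f
    (hom_eq_zero_of_le_of_ge t (t.le_monotone (le_max_right b c) _ hX) hQ (by omega) _)
  have hKv : v.GE 1 K := by
    refine v.GE_one_of_orthogonal (inUN_of_ge_of_le t (ge_obj₁ t hT hY hQ) hK) fun Z hZ ζ => ?_
    obtain ⟨ψ, rfl⟩ := Triangle.coyoneda_exact₂ _ (inv_rot_of_distTriang _ hT) ζ (hYv Z hZ _)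
    have hQ' : t.ge (max b c + 2) (Q⟦(-1 : ℤ)⟧) := (ge_shift_iff t Q (-1) _).2 (by
      rwa [show max b c + 2 + -1 = max b c + 1 by ring])
    rw [hom_eq_zero_of_le_of_ge t (t.le_monotone (le_max_left b c) _ (hb Z hZ)) hQ' (by omega) ψ]
    exact zero_comp
  rw [hXv K hKv g, zero_comp]

end RelTStructure

lemma sInf_lt_top_iff_exists (P : ℕ → Prop) :
    sInf {e : ℕ∞ | ∃ d : ℕ, e = d ∧ P d} < ⊤ ↔ ∃ d, P d := by
  rw [sInf_lt_iff]
  constructor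
  · rintro ⟨_, ⟨d, rfl, hd⟩, -⟩
    exact ⟨d, hd⟩
  · rintro ⟨d, hd⟩
    exact ⟨d, ⟨d, rfl, hd⟩, ENat.natCast_lt_top d⟩

section Distance

variable {u V : TStructure C}

lemma exists_le_bounds_of_dist_lt_top (h : dist u V < ⊤) :
    ∃ a b : ℤ, (∀ X, u.le a X → V.le 0 X) ∧ (∀ X, V.le 0 X → u.le b X) := by
  obtain ⟨d, m, h₁, h₂⟩ := (sInf_lt_top_iff_exists _).1 h
  refine ⟨-(m + d), -m, fun X hX => ?_, fun X hX => ?_⟩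
  · simpa using le_of_le_subset u h₂ (-(m + d)) (X := X) (by simpa using hX)
  · simpa using le_of_le_subset V h₁ (-m) (X := X) (by simpa using hX)

lemma dist_lt_top_of_le_bounds {a b : ℤ} (ha : ∀ X, u.le a X → V.le 0 X)
    (hb : ∀ X, V.le 0 X → u.le b X) : dist u V < ⊤ := by
  refine (sInf_lt_top_iff_exists _).2 ⟨(b - a).toNat, -b, fun X hX => ?_, fun X hX => ?_⟩
  · simpa using le_of_le_subset V hb (-b) (X := X) (by simpa using hX)
  · refine V.le_monotone (show -a ≤ -b + (b - a).toNat by omega) _ ?_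
    simpa using le_of_le_subset u ha (-a) (X := X) (by simpa using hX)

end Distance

def restrict (u V : TStructure C) (hV : dist u V < ⊤) : RelTStructure u where
  LE n X := V.le n X ∧ InUN u X
  GE n X := V.ge n X ∧ InUN u X
  LE_mem _ _ h := h.2
  GE_mem _ _ h := h.2
  LE_iso _ _ _ e h := ⟨(V.le _).prop_of_iso e h.1, inUN_of_iso u e h.2⟩
  GE_iso _ _ _ e h := ⟨(V.ge _).prop_of_iso e h.1, inUN_of_iso u e h.2⟩
  LE_shift n a n' h X hX := ⟨V.le_shift n a n' h X hX.1, inUN_shift u a hX.2⟩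
  GE_shift n a n' h X hX := ⟨V.ge_shift n a n' h X hX.1, inUN_shift u a hX.2⟩
  zero' _ _ f hX hY := V.zero' f hX.1 hY.1
  LE_zero_le X h := ⟨V.le_zero_le X h.1, h.2⟩
  GE_one_le X h := ⟨V.ge_one_le X h.1, h.2⟩
  exists_triangle A hA := by
    obtain ⟨a, b, ha, hb⟩ := exists_le_bounds_of_dist_lt_top hV
    obtain ⟨N, hA₁, hA₂⟩ := hA
    obtain ⟨X, Y, hX, hY, f, g, δ, hT⟩ := V.exists_triangle_zero_one A
    have hXb := hb X hX
    have hYa := ge_of_le_subset u ha hY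
    exact ⟨X, Y, ⟨hX, inUN_of_ge_of_le u (ge_obj₁ u hT hA₁ hYa) hXb⟩,
      ⟨hY, inUN_of_ge_of_le u hYa (le_obj₃ u hT hXb hA₂)⟩, f, g, δ, hT⟩

lemma distRel_restrict_lt_top {u V : TStructure C} (hV : dist u V < ⊤) :
    distRel u (restrict u V hV) < ⊤ := by
  obtain ⟨d, m, h₁, h₂⟩ := (sInf_lt_top_iff_exists _).1 hV
  exact (sInf_lt_top_iff_exists _).2 ⟨d, m, fun X hX => h₁ X hX.1, fun X hX h => ⟨h₂ X h, hX⟩⟩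

lemma le_zero_of_restrict_GE_eq {u V W : TStructure C} (hV : dist u V < ⊤) (hW : dist u W < ⊤)
    (h : (restrict u W hW).GE 1 = (restrict u V hV).GE 1) {X : C} (hX : W.le 0 X) :
    V.le 0 X := by
  obtain ⟨aV, bV, haV, hbV⟩ := exists_le_bounds_of_dist_lt_top hV
  obtain ⟨-, bW, -, hbW⟩ := exists_le_bounds_of_dist_lt_top hW
  refine le_of_orthogonal V fun Y hY f => ?_
  refine (restrict u V hV).hom_eq_zero_of_orthogonal (fun Z hZ => hbV Z hZ.1) (hbW X hX)
    (fun Z hZ g => ?_) (ge_of_le_subset u haV hY) (fun Z hZ g => ?_) f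
  · exact hom_eq_zero_of_le_of_ge W hX (h ▸ hZ : (restrict u W hW).GE 1 Z).1 zero_lt_one g
  · exact hom_eq_zero_of_le_of_ge V hZ.1 hY zero_lt_one g

lemma exists_isBetween_of_distRel_lt_top {t : TStructure C} {v : RelTStructure t}
    (hv : distRel t v < ⊤) : ∃ a b : ℤ, v.IsBetween a b := by
  obtain ⟨d, m, h₁, h₂⟩ := (sInf_lt_top_iff_exists _).1 hv
  refine ⟨-(m + d), -m, ⟨by omega, fun n X hX hle => ?_, fun n X hX => ?_⟩⟩
  · have := h₂ _ (inUN_shift t (n - (m + d)) hX) ((le_shift_iff t X _ 0).2 (by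
      rwa [show 0 + (n - (m + d)) = -(m + d) + n by ring]))
    rwa [RelTStructure.LE_shift_iff, show m + d + (n - (m + d)) = n by ring] at this
  · have := h₁ _ ((v.LE_shift_iff X (n - m) m).2 (by rwa [show m + (n - m) = n by ring]))
    rwa [le_shift_iff, show 0 + (n - m) = -m + n by ring] at this

section Extension

variable {t : TStructure C} (v : RelTStructure t)

def extendLE (b n : ℤ) : ObjectProperty C :=
  fun X => t.le (b + n) X ∧ ∀ Y, v.GE (n + 1) Y → ∀ f : X ⟶ Y, f = 0

def extendGE (a n : ℤ) : ObjectProperty C :=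
  fun Y => t.ge (a + n) Y ∧ ∀ X, v.LE (n - 1) X → ∀ f : X ⟶ Y, f = 0

variable {v} {a b : ℤ}

lemma exists_triangle_extendLE_extendGE (hv : v.IsBetween a b) (A : C) :
    ∃ (X Y : C) (_ : extendLE v b 0 X) (_ : extendGE v a 1 Y) (f : X ⟶ A) (g : A ⟶ Y)
      (h : Y ⟶ X⟦(1 : ℤ)⟧), Triangle.mk f g h ∈ distTriang C := by
  have hab := hv.le
  obtain ⟨A₁, A₂, hA₁, hA₂, i, p, δ, hA⟩ := t.exists_triangle A b (b + 1) rfl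
  obtain ⟨P, M, hP, hM, e, g, δ₁, hA₁'⟩ := t.exists_triangle A₁ (a - 1) a (by ring)
  obtain ⟨M₁, M₂, hM₁, hM₂, f, q, δ₂, hM'⟩ :=
    v.exists_triangle M (inUN_of_ge_of_le t hM (le_obj₃ t hA₁' hP hA₁))
  obtain ⟨X, i', δ₃, hX⟩ := distinguished_cocone_triangle₁ (g ≫ q)
  obtain ⟨Y, g', δ₄, hY⟩ := distinguished_cocone_triangle (i' ≫ i)
  have hM₁b : t.le (b + 0) M₁ := hv.le_of_LE 0 M₁ hM₁
  have hM₂a : t.ge (a + 1) M₂ := hv.ge_of_GE hM₂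
  refine ⟨X, Y, ⟨?_, fun Z hZ => ?_⟩, ⟨?_, fun Z hZ => ?_⟩, i' ≫ i, g', δ₄, hY⟩
  · refine le_of_orthogonal t fun Z hZ => hom_from_fiber_comp_eq_zero hA₁' hM' hX ?_ ?_
    · exact hom_eq_zero_of_le_of_ge t hP hZ (by omega)
    · exact hom_eq_zero_of_le_of_ge t hM₁b hZ (by omega)
  · refine hom_from_fiber_comp_eq_zero hA₁' hM' hX ?_ (v.hom_eq_zero_of_LE_of_GE hM₁ hZ (by omega))
    exact hom_eq_zero_of_le_of_ge t hP (hv.ge_of_GE hZ) (by omega)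
  · refine ge_of_orthogonal t fun Z hZ => hom_to_cone_comp_eq_zero hX hA hY ?_ ?_
    · exact hom_eq_zero_of_le_of_ge t hZ hM₂a (by omega)
    · exact hom_eq_zero_of_le_of_ge t hZ hA₂ (by omega)
  · refine hom_to_cone_comp_eq_zero hX hA hY (v.hom_eq_zero_of_LE_of_GE hZ hM₂ (by omega)) ?_
    exact hom_eq_zero_of_le_of_ge t (hv.le_of_LE _ Z hZ) hA₂ (by omega)

def extend (hv : v.IsBetween a b) : TStructure C where
  le := extendLE v b
  ge := extendGE v a
  le_isClosedUnderIsomorphisms n := ⟨fun e hX => ⟨(t.le _).prop_of_iso e hX.1,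
    fun Y hY f => by rw [← cancel_epi e.hom, comp_zero]; exact hX.2 Y hY _⟩⟩
  ge_isClosedUnderIsomorphisms n := ⟨fun e hY => ⟨(t.ge _).prop_of_iso e hY.1,
    fun X hX f => by rw [← cancel_mono e.inv, zero_comp]; exact hY.2 X hX _⟩⟩
  le_shift n s n' h X hX := by
    refine ⟨t.le_shift _ s _ (by omega) X hX.1, fun Y hY f => ?_⟩
    refine hom_from_shift_eq_zero s (hX.2 _ ((v.GE_shift_iff Y (-s) _).2 ?_)) f
    rwa [show n + 1 + -s = n' + 1 by omega]
  ge_shift n s n' h Y hY := by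
    refine ⟨t.ge_shift _ s _ (by omega) Y hY.1, fun X hX f => ?_⟩
    refine hom_to_shift_eq_zero s (hY.2 _ ((v.LE_shift_iff X (-s) _).2 ?_)) f
    rwa [show n - 1 + -s = n' - 1 by omega]
  zero' X Y f hX hY := v.hom_eq_zero_of_orthogonal (hv.le_of_LE 0) hX.1 hX.2 hY.1 hY.2 f
  le_zero_le X hX := ⟨t.le_monotone (by omega) _ hX.1,
    fun Y hY f => hX.2 Y (v.GE_antitone (by omega) _ hY) f⟩
  ge_one_le Y hY := ⟨t.ge_antitone (by omega) _ hY.1,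
    fun X hX f => hY.2 X (v.LE_monotone (by omega) _ hX) f⟩
  exists_triangle_zero_one := exists_triangle_extendLE_extendGE hv

lemma dist_extend_lt_top (hv : v.IsBetween a b) : dist t (extend hv) < ⊤ := by
  have hab := hv.le
  refine dist_lt_top_of_le_bounds (a := a) (b := b) (fun X hX => ⟨?_, fun Y hY f => ?_⟩)
    fun X hX => by simpa using hX.1
  · exact t.le_monotone (by omega) _ hX
  · exact hom_eq_zero_of_le_of_ge t hX (hv.ge_of_GE hY) (by omega) f

lemma restrict_extend (hv : v.IsBetween a b) (h : dist t (extend hv) < ⊤) :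
    restrict t (extend hv) h = v := by
  have hLE : ∀ n X, v.LE n X ↔ extendLE v b n X ∧ InUN t X := fun n X =>
    ⟨fun hX => ⟨⟨hv.le_of_LE n X hX, fun Y hY f => v.hom_eq_zero_of_LE_of_GE hX hY (by omega) f⟩,
      v.LE_mem n X hX⟩, fun hX => v.LE_of_orthogonal hX.2 hX.1.2⟩
  have hGE : ∀ n Y, v.GE n Y ↔ extendGE v a n Y ∧ InUN t Y := fun n Y =>
    ⟨fun hY => ⟨⟨hv.ge_of_GE hY, fun X hX f => v.hom_eq_zero_of_LE_of_GE hX hY (by omega) f⟩,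
      v.GE_mem n Y hY⟩, fun hY => v.GE_of_orthogonal hY.2 hY.1.2⟩
  exact RelTStructure.ext (fun n X => (hLE n X).symm) (fun n Y => (hGE n Y).symm)

end Extension

/-- Keller. The assignment `V ↦ V^b`, sending a t-structure `V` on `T` to
its restriction `V^b = (V_{≤0} ∩ T^b, V_{≥0} ∩ T^b)` on `T^b = U_ℕ`, is a bijection from the
set of t-structures `V` on `T` with `d(U,V) < +∞` onto the set of t-structures `V'` on `T^b`
with `d(U^b,V') < +∞`. -/
theorem statement18 (t : TStructure C) :
    ∃ F : {V : TStructure C // dist t V < ⊤} → {V' : RelTStructure t // distRel t V' < ⊤},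
      (∀ V, ∀ (n : ℤ) (X : C),
        ((F V).1.LE n X ↔ V.1.le n X ∧ InUN t X) ∧
        ((F V).1.GE n X ↔ V.1.ge n X ∧ InUN t X)) ∧
      Function.Bijective F := by
  refine ⟨fun V => ⟨restrict t V.1 V.2, distRel_restrict_lt_top V.2⟩,
    fun _ _ _ => ⟨Iff.rfl, Iff.rfl⟩, ?_, ?_⟩
  · rintro ⟨V, hV⟩ ⟨W, hW⟩ hVW
    have hGE : (restrict t V hV).GE 1 = (restrict t W hW).GE 1 :=
      congrArg (fun w => w.1.GE 1) hVW
    exact Subtype.ext (tStructure_ext fun X =>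
      ⟨le_zero_of_restrict_GE_eq hW hV hGE, le_zero_of_restrict_GE_eq hV hW hGE.symm⟩)
  · rintro ⟨v, hv⟩
    obtain ⟨a, b, hvab⟩ := exists_isBetween_of_distRel_lt_top hv
    have hdist := dist_extend_lt_top hvab
    exact ⟨⟨extend hvab, hdist⟩, Subtype.ext (restrict_extend hvab hdist)⟩

end TStructurePaper
end
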